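/- arXiv:1805.09499 — 3 statements merged into one kernel-verified Lean document; each statement's English description precedes it below -/
import Mathlib

section
/- There exists a strictly increasing continuous function 𝔰 on J such that the Stieltjes measure d𝔰 satisfies d𝔰(J) < ε, d𝔰 is absolutely continuous with respect to d𝚜, and the Radon–Nikodym derivative d𝔰/d𝚜 equals 0 or 1, d𝚜-almost everywhere on J. -/
/-!
For every rational interval `(p, q)` inside `J` choose a short interval `(p, d)` whose
`d𝚜`-mass is below the `(p, q)`-th term of a positive series of sum `< ε`. Their union `U` is an
open subset of `J` of `d𝚜`-measure `< ε` meeting every subinterval of `J` in positive measure.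
The Stieltjes function of `d𝚜` restricted to `U` is then strictly increasing on `J`, has no atoms
because `𝚜` is continuous on the open set `U ⊆ J`, and its density with respect to `d𝚜` on `J` is
the indicator of `U`.
-/

open MeasureTheory Set ENNReal Filter Topology

theorem MeasureTheory.Measure.exists_stieltjesFunction_measure_eq (ν : Measure ℝ)
    [IsFiniteMeasure ν] : ∃ f : StieltjesFunction ℝ, f.measure = ν := by
  rcases eq_zero_or_neZero ν with rfl | hν
  · exact ⟨0, StieltjesFunction.measure_zero⟩
  refine ⟨(ν univ).toNNReal • ProbabilityTheory.cdf ((ν univ)⁻¹ • ν), ?_⟩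
  rw [StieltjesFunction.measure_smul, ProbabilityTheory.measure_cdf, ENNReal.smul_def, smul_smul,
    ENNReal.coe_toNNReal (measure_ne_top ν univ),
    ENNReal.mul_inv_cancel (NeZero.ne (ν univ)) (measure_ne_top ν univ), one_smul]

theorem tendsto_measure_Ioo_nhdsGT (μ : Measure ℝ) [IsFiniteMeasureOnCompacts μ] (x : ℝ) :
    Tendsto (fun y ↦ μ (Ioo x y)) (𝓝[>] x) (𝓝 0) := by
  have hfin : μ (Ioo x (x + 1)) ≠ ∞ :=
    ((measure_mono Ioo_subset_Icc_self).trans_lt isCompact_Icc.measure_lt_top).ne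
  have h := tendsto_measure_biInter_gt (μ := μ) (s := Ioo x) (fun _ _ ↦ nullMeasurableSet_Ioo)
    (fun _ _ _ hij ↦ Ioo_subset_Ioo_right hij) ⟨x + 1, by linarith, hfin⟩
  have hempty : ⋂ r > x, Ioo x r = ∅ :=
    eq_empty_of_forall_notMem fun z hz ↦ by
      have hz' := mem_iInter₂.1 hz
      exact (hz' z (hz' (x + 1) (by linarith)).1).2.false
  rwa [hempty, measure_empty] at h

namespace StieltjesFunction

variable (f : StieltjesFunction ℝ)

theorem measure_singleton_eq_zero_iff_continuousAt (x : ℝ) :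
    f.measure {x} = 0 ↔ ContinuousAt f x := by
  rw [f.measure_singleton, ofReal_eq_zero, sub_nonpos,
    f.mono.continuousAt_iff_leftLim_eq_rightLim, f.rightLim_eq]
  exact ⟨fun h ↦ le_antisymm (f.mono.leftLim_le le_rfl) h, ge_of_eq⟩

theorem measure_Ioo_pos_of_strictMonoOn {J : Set ℝ} (hf : StrictMonoOn f J) {x y : ℝ}
    (hxy : x < y) (hJ : Ioo x y ⊆ J) : 0 < f.measure (Ioo x y) := by
  obtain ⟨a, hxa, hay⟩ := exists_between hxy
  obtain ⟨b, hab, hby⟩ := exists_between hay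
  calc 0 < f.measure (Ioc a b) := by
        rw [f.measure_Ioc, ofReal_pos, sub_pos]
        exact hf (hJ ⟨hxa, hay⟩) (hJ ⟨hxa.trans hab, hby⟩) hab
    _ ≤ f.measure (Ioo x y) := measure_mono (Ioc_subset_Ioo hxa.le hby)

theorem continuous_of_measure_eq_restrict {g : StieltjesFunction ℝ} {U : Set ℝ} (hU : IsOpen U)
    (hg : ContinuousOn g U) (hf : f.measure = g.measure.restrict U) : Continuous f := by
  refine continuous_iff_continuousAt.2 fun x ↦ (f.measure_singleton_eq_zero_iff_continuousAt x).1 ?_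
  rw [hf, Measure.restrict_apply (measurableSet_singleton x)]
  by_cases hxU : x ∈ U
  · exact measure_mono_null inter_subset_left <|
      (g.measure_singleton_eq_zero_iff_continuousAt x).2 (hg.continuousAt (hU.mem_nhds hxU))
  · simp [hxU]

end StieltjesFunction

theorem exists_isOpen_subset_measure_lt_forall_measure_inter_Ioo_pos (μ : Measure ℝ)
    [IsFiniteMeasureOnCompacts μ] {J : Set ℝ}
    (hpos : ∀ x y, x < y → Ioo x y ⊆ J → 0 < μ (Ioo x y)) {ε : ℝ≥0∞} (hε : ε ≠ 0) :
    ∃ U, IsOpen U ∧ U ⊆ J ∧ μ U < ε ∧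
      ∀ x y, x < y → Ioo x y ⊆ J → 0 < μ (U ∩ Ioo x y) := by
  let ι := {i : ℚ × ℚ // (i.1 : ℝ) < i.2 ∧ Ioo (i.1 : ℝ) i.2 ⊆ J}
  obtain ⟨δ, hδ, hδε⟩ := ENNReal.exists_pos_sum_of_countable' hε ι
  have hd (i : ι) : ∃ d, (i.1.1 : ℝ) < d ∧ d < i.1.2 ∧ μ (Ioo (i.1.1 : ℝ) d) < δ i :=
    Eventually.exists (f := 𝓝[>] (i.1.1 : ℝ)) <| eventually_mem_nhdsWithin.and <|
      (eventually_nhdsWithin_of_eventually_nhds (eventually_lt_nhds i.2.1)).and <|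
        (tendsto_measure_Ioo_nhdsGT μ _).eventually (gt_mem_nhds (hδ i))
  choose d hpd hdq hdδ using hd
  refine ⟨⋃ i, Ioo (i.1.1 : ℝ) (d i), isOpen_iUnion fun _ ↦ isOpen_Ioo,
    iUnion_subset fun i ↦ (Ioo_subset_Ioo_right (hdq i).le).trans i.2.2, ?_, ?_⟩
  · calc μ (⋃ i, Ioo (i.1.1 : ℝ) (d i))
        ≤ ∑' i, μ (Ioo (i.1.1 : ℝ) (d i)) := measure_iUnion_le _
      _ ≤ ∑' i, δ i := ENNReal.tsum_le_tsum fun i ↦ (hdδ i).le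
      _ < ε := hδε
  · intro x y hxy hJ
    obtain ⟨p, hxp, hpy⟩ := exists_rat_btwn hxy
    obtain ⟨q, hpq, hqy⟩ := exists_rat_btwn hpy
    let i : ι := ⟨(p, q), hpq, (Ioo_subset_Ioo hxp.le hqy.le).trans hJ⟩
    have hi : Ioo (p : ℝ) (d i) ⊆ Ioo x y := Ioo_subset_Ioo hxp.le ((hdq i).trans hqy).le
    calc 0 < μ (Ioo (p : ℝ) (d i)) := hpos _ _ (hpd i) (hi.trans hJ)
      _ ≤ _ := measure_mono <|
        subset_inter (subset_iUnion (fun j : ι ↦ Ioo (j.1.1 : ℝ) (d j)) i) hi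

/-- For a scale function `𝚜` (strictly increasing, continuous) on an interval `J` and `ε > 0`,
there exists a scale function `𝔰` on `J` with `d𝔰(J) < ε`, `d𝔰 ≪ d𝚜` on `J`, and
`d𝔰/d𝚜 = 0` or `1`, `d𝚜`-a.e. on `J`. -/
theorem stmt_0 (J : Set ℝ) (hJ : J.OrdConnected) (s : StieltjesFunction ℝ)
    (hs_mono : StrictMonoOn s J) (hs_cont : ContinuousOn s J)
    (ε : ℝ≥0∞) (hε : 0 < ε) :
    ∃ f : StieltjesFunction ℝ, StrictMonoOn f J ∧ ContinuousOn f J ∧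
      f.measure J < ε ∧
      (f.measure.restrict J) ≪ (s.measure.restrict J) ∧
      (∀ᵐ x ∂(s.measure.restrict J),
        (f.measure.restrict J).rnDeriv (s.measure.restrict J) x = 0 ∨
        (f.measure.restrict J).rnDeriv (s.measure.restrict J) x = 1) := by
  obtain ⟨U, hUo, hUJ, hUε, hUpos⟩ :=
    exists_isOpen_subset_measure_lt_forall_measure_inter_Ioo_pos s.measure
      (fun _ _ ↦ s.measure_Ioo_pos_of_strictMonoOn hs_mono) hε.ne'
  have : IsFiniteMeasure (s.measure.restrict U) :=
    isFiniteMeasure_restrict.2 (hUε.trans_le le_top).ne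
  obtain ⟨f, hf⟩ := (s.measure.restrict U).exists_stieltjesFunction_measure_eq
  have hfJ : f.measure.restrict J = (s.measure.restrict J).restrict U := by
    rw [hf, Measure.restrict_restrict hJ.measurableSet,
      Measure.restrict_restrict hUo.measurableSet, inter_eq_left.2 hUJ, inter_eq_right.2 hUJ]
  refine ⟨f, fun x hx y hy hxy ↦ ?_, ?_, ?_, ?_, ?_⟩
  · have h : 0 < f.measure (Ioc x y) := by
      rw [hf, Measure.restrict_apply measurableSet_Ioc]
      exact (hUpos x y hxy (Ioo_subset_Icc_self.trans (hJ.out hx hy))).trans_le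
        (measure_mono fun z hz ↦ ⟨Ioo_subset_Ioc_self hz.2, hz.1⟩)
    rwa [f.measure_Ioc, ofReal_pos, sub_pos] at h
  · exact (f.continuous_of_measure_eq_restrict hUo (hs_cont.mono hUJ) hf).continuousOn
  · rwa [hf, Measure.restrict_apply hJ.measurableSet, inter_eq_right.2 hUJ]
  · rw [hfJ]
    exact Measure.absolutelyContinuous_of_le Measure.restrict_le_self
  · rw [hfJ]
    filter_upwards [Measure.rnDeriv_restrict_self _ hUo.measurableSet] with x hx
    rw [hx]
    by_cases hxU : x ∈ U <;> simp [hxU]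
end

section
/- If 𝚜 is a strictly increasing continuous function on J, G is a dense open subset of J, e ∈ J is fixed, and 𝔰(x) := ∫_e^x 1_G(y) d𝚜(y), then 𝔰 is strictly increasing on J. -/
open MeasureTheory Set ENNReal

/-! For `a < b` in `J`, `𝔰 b - 𝔰 a` is the `d𝚜`-measure of `G ∩ (a, b]`. Since `G` is relatively
open and dense in `J`, this set contains a nonempty open interval, and a strictly increasing `𝚜`
gives every nonempty open interval positive measure. -/

namespace StieltjesFunction

variable (s : StieltjesFunction ℝ)

theorem measure_Ioo_pos_of_strictMonoOn_s2 {a b : ℝ} (hab : a < b) (hs : StrictMonoOn s (Ioo a b)) :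
    0 < s.measure (Ioo a b) := by
  obtain ⟨x, hax, hxb⟩ := exists_between hab
  obtain ⟨y, hxy, hyb⟩ := exists_between hxb
  calc 0 < s.measure (Ioc x y) := by
        rw [s.measure_Ioc, ENNReal.ofReal_pos, sub_pos]
        exact hs ⟨hax, hxb⟩ ⟨hax.trans hxy, hyb⟩ hxy
    _ ≤ s.measure (Ioo a b) := measure_mono fun z hz => ⟨hax.trans hz.1, hz.2.trans_lt hyb⟩

theorem measure_pos_of_isOpen {V : Set ℝ} (hV : IsOpen V) (hne : V.Nonempty)
    (hs : StrictMonoOn s V) : 0 < s.measure V := by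
  obtain ⟨a, b, hab, hsub⟩ := hV.exists_Ioo_subset hne
  exact (s.measure_Ioo_pos_of_strictMonoOn_s2 hab (hs.mono hsub)).trans_le (measure_mono hsub)

end StieltjesFunction

section IndicatorIntegral

variable {μ : Measure ℝ} {G : Set ℝ}

theorem intervalIntegrable_indicator_const [IsLocallyFiniteMeasure μ] (hG : MeasurableSet G) (c a b : ℝ) :
    IntervalIntegrable (G.indicator fun _ => c) μ a b :=
  intervalIntegrable_iff.2 ((intervalIntegrable_iff.1 intervalIntegrable_const).indicator hG)

theorem intervalIntegral_indicator_one (hG : MeasurableSet G) {a b : ℝ} (hab : a ≤ b) :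
    ∫ y in a..b, G.indicator (fun _ => (1 : ℝ)) y ∂μ = μ.real (G ∩ Ioc a b) := by
  rw [intervalIntegral.integral_of_le hab, integral_indicator hG, Measure.restrict_restrict hG,
    setIntegral_const, smul_eq_mul, mul_one]

end IndicatorIntegral

theorem exists_isOpen_subset_inter_Ioc_of_dense {J G : Set ℝ} (hJ : J.OrdConnected)
    (hG_open : ∃ U : Set ℝ, IsOpen U ∧ G = U ∩ J) (hG_dense : J ⊆ closure G) {a b : ℝ}
    (ha : a ∈ J) (hb : b ∈ J) (hab : a < b) :
    ∃ V, IsOpen V ∧ V.Nonempty ∧ V ⊆ G ∩ Ioc a b := by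
  obtain ⟨U, hU, rfl⟩ := hG_open
  have hIoo : Ioo a b ⊆ J := Ioo_subset_Icc_self.trans (hJ.out ha hb)
  obtain ⟨m, hm⟩ := exists_between hab
  obtain ⟨c, hcab, hcG⟩ := mem_closure_iff.1 (hG_dense (hIoo hm)) (Ioo a b) isOpen_Ioo hm
  refine ⟨U ∩ Ioo a b, hU.inter isOpen_Ioo, ⟨c, hcG.1, hcab⟩, ?_⟩
  rintro x ⟨hxU, hx⟩
  exact ⟨⟨hxU, hIoo hx⟩, Ioo_subset_Ioc_self hx⟩

theorem stmt_2_general (J : Set ℝ) (hJ : J.OrdConnected) (s : StieltjesFunction ℝ)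
    (hs_mono : StrictMonoOn s J)
    (G : Set ℝ)
    (hG_open : ∃ U : Set ℝ, IsOpen U ∧ G = U ∩ J)
    (hG_dense : J ⊆ closure G)
    (e : ℝ)
    (f : ℝ → ℝ)
    (hf : ∀ x, f x = ∫ y in e..x, G.indicator (fun _ => (1 : ℝ)) y ∂s.measure) :
    StrictMonoOn f J := by
  have hG : MeasurableSet G := by
    obtain ⟨U, hU, rfl⟩ := hG_open
    exact hU.measurableSet.inter hJ.measurableSet
  intro a ha b hb hab
  obtain ⟨V, hV, hVne, hVsub⟩ :=
    exists_isOpen_subset_inter_Ioc_of_dense hJ hG_open hG_dense ha hb hab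
  have hVJ : V ⊆ J := fun x hx => Ioc_subset_Icc_self.trans (hJ.out ha hb) (hVsub hx).2
  have hpos : 0 < s.measure (G ∩ Ioc a b) :=
    (s.measure_pos_of_isOpen hV hVne (hs_mono.mono hVJ)).trans_le (measure_mono hVsub)
  have hfin : s.measure (G ∩ Ioc a b) ≠ ∞ :=
    ((measure_mono inter_subset_right).trans_lt measure_Ioc_lt_top).ne
  have hdiff : f b - f a = s.measure.real (G ∩ Ioc a b) := by
    rw [hf, hf, intervalIntegral.integral_interval_sub_left
      (intervalIntegrable_indicator_const hG 1 e b) (intervalIntegrable_indicator_const hG 1 e a),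
      intervalIntegral_indicator_one hG hab.le]
  have := ENNReal.toReal_pos hpos.ne' hfin
  rw [measureReal_def] at hdiff
  linarith

/-- If `𝚜` is a strictly increasing continuous function on an interval `J`, `G` is a dense
open subset of `J`, `e ∈ J`, and `𝔰(x) = ∫_e^x 1_G(y) d𝚜(y)`, then `𝔰` is strictly
increasing on `J`. -/
theorem stmt_2 (J : Set ℝ) (hJ : J.OrdConnected) (s : StieltjesFunction ℝ)
    (hs_mono : StrictMonoOn s J) (hs_cont : ContinuousOn s J)
    (G : Set ℝ) (hGJ : G ⊆ J)
    (hG_open : ∃ U : Set ℝ, IsOpen U ∧ G = U ∩ J)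
    (hG_dense : J ⊆ closure G)
    (e : ℝ) (he : e ∈ J)
    (f : ℝ → ℝ)
    (hf : ∀ x, f x = ∫ y in e..x, G.indicator (fun _ => (1 : ℝ)) y ∂s.measure) :
    StrictMonoOn f J :=
  stmt_2_general J hJ s hs_mono G hG_open hG_dense e f hf
end

section
/- Let {I_n : n ≥ 1} be at most countably many pairwise disjoint intervals contained in [a,b] such that every I_n is closed and the complement [a,b] \ ⋃_n I_n contains no nonempty open interval (i.e., the union of the I_n is dense in [a,b]). If there are at least two distinct intervals I_i, I_j with I_i lying strictly to the left of I_j and infinitely many intervals I_n lie between them, then [a,b] \ ⋃_n I_n is uncountable. -/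
/-!
Let `E` be `[B i, A j]` with the open interiors of all the intervals removed. `E` is closed, and
it contains `B i`. It has no isolated point: a point of `E` that is not approached by `E` from
the right is the left end of an interval, and one that is not approached from the left is the
right end of an interval, so an isolated point would be shared by two disjoint closed
intervals. Being nonempty and perfect, `E` is uncountable; but it differs from
`[a, b] \ ⋃ n, [A n, B n]` only by endpoints of intervals, of which there are countably many.
-/

open Set Filter Topology Function

instance uncountable_nat_bool : Uncountable (ℕ → Bool) := by
  rw [← Cardinal.aleph0_lt_mk_iff]
  simpa using Cardinal.cantor Cardinal.aleph0

theorem Perfect.not_countable {α : Type*} [MetricSpace α] [CompleteSpace α] {C : Set α}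
    (hC : Perfect C) (hne : C.Nonempty) : ¬ C.Countable := fun hcount => by
  obtain ⟨f, hfC, -, hf⟩ := hC.exists_nat_bool_injection hne
  have : (univ : Set (ℕ → Bool)).Countable := by
    simpa using (hcount.mono hfC).preimage hf
  exact not_countable_univ this

section IntervalFamily

variable {α ι : Type*} [LinearOrder α] {A B : ι → α}

def remainderIcc (A B : ι → α) (l r : α) : Set α := Icc l r \ ⋃ n, Ioo (A n) (B n)

theorem remainderIcc_subset {l r : α} {s : Set α} (h : Icc l r ⊆ s) :
    remainderIcc A B l r ⊆ (s \ ⋃ n, Icc (A n) (B n)) ∪ (range A ∪ range B) := by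
  rintro x ⟨hxI, hxO⟩
  by_cases hx : x ∈ ⋃ n, Icc (A n) (B n)
  · obtain ⟨n, hn⟩ := mem_iUnion.1 hx
    have hend : x ∈ Icc (A n) (B n) \ Ioo (A n) (B n) :=
      ⟨hn, fun h => hxO (mem_iUnion.2 ⟨n, h⟩)⟩
    rw [Icc_sdiff_Ioo_same (hn.1.trans hn.2)] at hend
    rcases hend with rfl | rfl
    · exact Or.inr (Or.inl (mem_range_self n))
    · exact Or.inr (Or.inr (mem_range_self n))
  · exact Or.inl ⟨h hxI, hx⟩

theorem left_notMem_iUnion_Ioo (hdisj : Pairwise (Disjoint on fun n => Icc (A n) (B n)))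
    {n : ι} (hn : A n ≤ B n) :
    A n ∉ ⋃ m, Ioo (A m) (B m) := by
  simp only [mem_iUnion, not_exists]
  intro m hm
  rcases eq_or_ne m n with rfl | hmn
  · exact lt_irrefl _ hm.1
  · exact disjoint_left.mp (hdisj hmn) (Ioo_subset_Icc_self hm) ⟨le_rfl, hn⟩

theorem right_notMem_iUnion_Ioo (hdisj : Pairwise (Disjoint on fun n => Icc (A n) (B n)))
    {n : ι} (hn : A n ≤ B n) :
    B n ∉ ⋃ m, Ioo (A m) (B m) := by
  simp only [mem_iUnion, not_exists]
  intro m hm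
  rcases eq_or_ne m n with rfl | hmn
  · exact lt_irrefl _ hm.2
  · exact disjoint_left.mp (hdisj hmn) (Ioo_subset_Icc_self hm) ⟨hn, le_rfl⟩

theorem eq_of_right_eq_left (hdisj : Pairwise (Disjoint on fun n => Icc (A n) (B n)))
    {m n : ι} (hm : A m ≤ B m) (hn : A n ≤ B n) (h : B m = A n) : m = n :=
  by_contra fun hmn => disjoint_left.mp (hdisj hmn) ⟨hm, le_rfl⟩ ⟨h.ge, h.le.trans hn⟩

variable [DenselyOrdered α] [TopologicalSpace α] [OrderTopology α] {l r x : α}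

theorem left_eq_or_accPt_of_mem_remainderIcc
    (hdisj : Pairwise (Disjoint on fun n => Icc (A n) (B n)))
    (hx : x ∈ remainderIcc A B l r) (hxr : x < r) :
    (∃ n, A n = x ∧ x < B n) ∨ AccPt x (𝓟 (remainderIcc A B l r)) := by
  refine or_iff_not_imp_left.2 fun hleft => ?_
  refine NeBot.mono ?_ (inf_le_inf_right _ (nhdsWithin_mono x fun y hy => ne_of_gt hy))
  refine ((nhdsGT_basis_of_exists_gt ⟨r, hxr⟩).inf_principal_neBot_iff).2 fun u hu => ?_
  obtain ⟨y, hxy, hyu⟩ := exists_between (lt_min hu hxr)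
  have hyr : y ≤ r := hyu.le.trans (min_le_right _ _)
  have hyu : y < u := hyu.trans_le (min_le_left _ _)
  by_cases hy : y ∈ ⋃ n, Ioo (A n) (B n)
  · obtain ⟨n, hAy, hyB⟩ := mem_iUnion.1 hy
    have hxA : x < A n := by
      refine lt_of_le_of_ne ?_ fun h => hleft ⟨n, h.symm, hxy.trans hyB⟩
      exact not_lt.1 fun h => hx.2 (mem_iUnion.2 ⟨n, h, hxy.trans hyB⟩)
    exact ⟨A n, ⟨hxA, hAy.trans hyu⟩, ⟨hx.1.1.trans hxA.le, hAy.le.trans hyr⟩,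
      left_notMem_iUnion_Ioo hdisj (hAy.trans hyB).le⟩
  · exact ⟨y, ⟨hxy, hyu⟩, ⟨hx.1.1.trans hxy.le, hyr⟩, hy⟩

theorem right_eq_or_accPt_of_mem_remainderIcc
    (hdisj : Pairwise (Disjoint on fun n => Icc (A n) (B n)))
    (hx : x ∈ remainderIcc A B l r) (hlx : l < x) :
    (∃ n, B n = x ∧ A n < x) ∨ AccPt x (𝓟 (remainderIcc A B l r)) := by
  refine or_iff_not_imp_left.2 fun hright => ?_
  refine NeBot.mono ?_ (inf_le_inf_right _ (nhdsWithin_mono x fun y hy => ne_of_lt hy))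
  refine ((nhdsLT_basis_of_exists_lt ⟨l, hlx⟩).inf_principal_neBot_iff).2 fun u hu => ?_
  obtain ⟨y, hly, hyx⟩ := exists_between (max_lt hu hlx)
  have hly' : l ≤ y := (le_max_right _ _).trans hly.le
  have huy : u < y := (le_max_left _ _).trans_lt hly
  by_cases hy : y ∈ ⋃ n, Ioo (A n) (B n)
  · obtain ⟨n, hAy, hyB⟩ := mem_iUnion.1 hy
    have hBx : B n < x := by
      refine lt_of_le_of_ne ?_ fun h => hright ⟨n, h, hAy.trans hyx⟩
      exact not_lt.1 fun h => hx.2 (mem_iUnion.2 ⟨n, hAy.trans hyx, h⟩)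
    exact ⟨B n, ⟨huy.trans hyB, hBx⟩, ⟨hly'.trans hyB.le, hBx.le.trans hx.1.2⟩,
      right_notMem_iUnion_Ioo hdisj (hAy.trans hyB).le⟩
  · exact ⟨y, ⟨huy, hyx⟩, ⟨hly', hyx.le.trans hx.1.2⟩, hy⟩

theorem perfect_remainderIcc (hdisj : Pairwise (Disjoint on fun n => Icc (A n) (B n)))
    (hAB : ∀ n, A n ≤ B n) {i j : ι} (hij : B i < A j) :
    Perfect (remainderIcc A B (B i) (A j)) := by
  refine ⟨isClosed_Icc.sdiff (isOpen_iUnion fun _ => isOpen_Ioo), fun x hx => ?_⟩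
  rcases hx.1.2.lt_or_eq with hxj | rfl
  · rcases left_eq_or_accPt_of_mem_remainderIcc hdisj hx hxj with ⟨n, rfl, hnB⟩ | hacc
    · rcases hx.1.1.lt_or_eq with hix | hin
      · rcases right_eq_or_accPt_of_mem_remainderIcc hdisj hx hix with ⟨m, hmn, hAm⟩ | hacc
        · cases eq_of_right_eq_left hdisj (hAB m) (hAB n) hmn
          exact absurd hAm (lt_irrefl _)
        · exact hacc
      · cases eq_of_right_eq_left hdisj (hAB i) (hAB n) hin
        exact absurd hin hnB.ne'
    · exact hacc
  · rcases right_eq_or_accPt_of_mem_remainderIcc hdisj hx hij with ⟨m, hmj, hAm⟩ | hacc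
    · cases eq_of_right_eq_left hdisj (hAB m) (hAB j) hmj
      exact absurd hAm (lt_irrefl _)
    · exact hacc

end IntervalFamily

theorem stmt_4_general (a b : ℝ) (A B : ℕ → ℝ)
    (hAB : ∀ n, A n ≤ B n)
    (hsub : ∀ n, Icc (A n) (B n) ⊆ Icc a b)
    (hdisj : Pairwise (Function.onFun Disjoint (fun n => Icc (A n) (B n))))
    (i j : ℕ) (hlt : B i < A j) :
    ¬ (Icc a b \ ⋃ n, Icc (A n) (B n)).Countable := by
  have hne : (remainderIcc A B (B i) (A j)).Nonempty :=
    ⟨B i, ⟨le_rfl, hlt.le⟩, right_notMem_iUnion_Ioo hdisj (hAB i)⟩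
  have hIcc : Icc (B i) (A j) ⊆ Icc a b :=
    Icc_subset_Icc (hsub i ⟨hAB i, le_rfl⟩).1 (hsub j ⟨le_rfl, hAB j⟩).2
  intro hcount
  refine (perfect_remainderIcc hdisj hAB hlt).not_countable hne ?_
  exact (hcount.union ((countable_range A).union (countable_range B))).mono
    (remainderIcc_subset hIcc)

/-- Cantor-type structure: if `{[A n, B n]}` are pairwise disjoint closed subintervals of
`[a,b]` whose union leaves no nonempty open interval uncovered, and infinitely many of them
lie between two distinct intervals `[A i, B i]` and `[A j, B j]` (the first strictly to the
left of the second), then `[a,b] \ ⋃ n [A n, B n]` is uncountable. -/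
theorem stmt_4 (a b : ℝ) (A B : ℕ → ℝ)
    (hAB : ∀ n, A n ≤ B n)
    (hsub : ∀ n, Icc (A n) (B n) ⊆ Icc a b)
    (hdisj : Pairwise (Function.onFun Disjoint (fun n => Icc (A n) (B n))))
    (hdense : ∀ c d : ℝ, c < d → ¬ (Ioo c d ⊆ Icc a b \ ⋃ n, Icc (A n) (B n)))
    (i j : ℕ) (hij : i ≠ j) (hlt : B i < A j)
    (hinf : {n : ℕ | B i < A n ∧ B n < A j}.Infinite) :
    ¬ (Icc a b \ ⋃ n, Icc (A n) (B n)).Countable :=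
  stmt_4_general a b A B hAB hsub hdisj i j hlt
end
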